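/- Let 𝒜 be an admissible Banach A-valued function algebra on X, τ ∈ Δ(𝒜), ℳ = ker τ, φ = τ|_A. Then the following are equivalent: (i) φ[ℳ] ≠ 𝔄; (ii) for every f ∈ 𝒜, φ∘f = 0 implies f ∈ ℳ; (iii) for every f ∈ 𝒜, τ((φ∘f)·1) = τ(f); (iv) τ = ψ ⋄ φ for some ψ ∈ Δ(𝔄). -/
import Mathlib


open WeakDual

variable {X : Type*} [TopologicalSpace X] [CompactSpace X] [T2Space X] [Nonempty X]
variable {A : Type*} [NormedCommRing A] [NormedAlgebra ℂ A] [CompleteSpace A] [Nontrivial A]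
variable {B : Type*} [NormedCommRing B] [NormedAlgebra ℂ B] [CompleteSpace B]

/-- The embedding of scalar-valued continuous functions into `A`-valued ones,
`g ↦ g·𝟏`. -/
noncomputable def scalHom (X A : Type*) [TopologicalSpace X] [NormedCommRing A]
    [NormedAlgebra ℂ A] : C(X, ℂ) →ₐ[ℂ] C(X, A) :=
  AlgHom.compLeftContinuous ℂ (Algebra.ofId ℂ A) (continuous_algebraMap ℂ A)

/-- The scalar subalgebra `𝔄 = 𝒜 ∩ C(X)`, realized inside `C(X, ℂ)`: those scalar
functions `g` with `g·𝟏 ∈ 𝒜`. -/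
noncomputable def scalarSub (ι : B →ₐ[ℂ] C(X, A)) : Subalgebra ℂ C(X, ℂ) :=
  Subalgebra.comap (scalHom X A) (AlgHom.range ι)

/-- For a character τ of 𝒜 with ℳ = ker τ and φ = τ|_A, the following are equivalent:
(i) φ[ℳ] ≠ 𝔄; (ii) φ∘f = 0 → f ∈ ℳ; (iii) τ((φ∘f)·𝟏) = τ(f) for all f;
(iv) τ = ψ ⋄ φ for some character ψ of 𝔄. -/
theorem stmt14
(ι : B →ₐ[ℂ] C(X, A)) (hinj : Function.Injective ι)
    (κ : A →ₐ[ℂ] B) (hκ : ∀ a : A, ι (κ a) = ContinuousMap.const X a)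
    (hκnorm : ∃ c₁ > (0:ℝ), ∃ c₂ > (0:ℝ), ∀ a : A, c₁ * ‖a‖ ≤ ‖κ a‖ ∧ ‖κ a‖ ≤ c₂ * ‖a‖)
    (hdom : ∀ f : B, ‖ι f‖ ≤ ‖f‖)
    (hsep : ∀ x y : X, x ≠ y → ∀ M : Ideal A, M.IsMaximal → ∃ f : B, ι f x - ι f y ∉ M)
    (hss : Ideal.jacobson (⊥ : Ideal A) = ⊥)
    (hadm : ∀ (f : B) (φ : A →ₐ[ℂ] ℂ), ∃ g : B, ∀ x : X, ι g x = algebraMap ℂ A (φ (ι f x)))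
    (τ : B →ₐ[ℂ] ℂ) :
    ((¬ ∀ g₀ : ↥(scalarSub ι), ∃ f : B, τ f = 0 ∧
        ∀ x : X, (g₀ : C(X, ℂ)) x = τ (κ (ι f x))) ↔
      (∀ f : B, (∀ x : X, τ (κ (ι f x)) = 0) → τ f = 0)) ∧
    ((∀ f : B, (∀ x : X, τ (κ (ι f x)) = 0) → τ f = 0) ↔
      (∀ f g : B, (∀ x : X, ι g x = algebraMap ℂ A (τ (κ (ι f x)))) → τ g = τ f)) ∧
    ((∀ f g : B, (∀ x : X, ι g x = algebraMap ℂ A (τ (κ (ι f x)))) → τ g = τ f) ↔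
      (∃ ψ : ↥(scalarSub ι) →ₐ[ℂ] ℂ, ∀ (f : B) (g₀ : ↥(scalarSub ι)),
        (∀ x : X, (g₀ : C(X, ℂ)) x = τ (κ (ι f x))) → τ f = ψ g₀)) := by
  have hφalg : ∀ z : ℂ, τ (κ (algebraMap ℂ A z)) = z := by
    intro z; rw [AlgHom.commutes, AlgHom.commutes]; rfl
  have hφcont : Continuous fun a : A => τ (κ a) := map_continuous (τ.comp κ)
  set e := AlgEquiv.ofInjective ι hinj with he
  have hρ : ∀ g₀ : ↥(scalarSub ι), (scalHom X A) (g₀ : C(X,ℂ)) ∈ ι.range :=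
    fun g₀ => g₀.2
  have hlift : ∀ g₀ : ↥(scalarSub ι), ι (e.symm ⟨_, hρ g₀⟩) = scalHom X A (g₀ : C(X,ℂ)) := by
    intro g₀
    have h1 := e.apply_symm_apply ⟨_, hρ g₀⟩
    have h2 : (e (e.symm ⟨_, hρ g₀⟩) : C(X,A)) = ι (e.symm ⟨_, hρ g₀⟩) := by
      rw [he]; exact rfl
    rw [← h2, h1]
  have hscal : ∀ (g : C(X,ℂ)) (x : X), (scalHom X A g) x = algebraMap ℂ A (g x) :=
    fun g x => rfl
  -- (ii) → (iii)
  have h23 : (∀ f : B, (∀ x : X, τ (κ (ι f x)) = 0) → τ f = 0) →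
      (∀ f g : B, (∀ x : X, ι g x = algebraMap ℂ A (τ (κ (ι f x)))) → τ g = τ f) := by
    intro hii f g hg
    have hz : ∀ x : X, τ (κ (ι (f - g) x)) = 0 := by
      intro x
      rw [map_sub, ContinuousMap.sub_apply, map_sub, map_sub, hg x, hφalg, sub_self]
    have := hii (f - g) hz
    rw [map_sub, sub_eq_zero] at this
    exact this.symm
  -- (iii) → (ii)
  have h32 : (∀ f g : B, (∀ x : X, ι g x = algebraMap ℂ A (τ (κ (ι f x)))) → τ g = τ f) →
      (∀ f : B, (∀ x : X, τ (κ (ι f x)) = 0) → τ f = 0) := by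
    intro hiii f hf
    have := hiii f 0 (by intro x; rw [hf x, map_zero, map_zero]; rfl)
    rw [map_zero] at this
    exact this.symm
  refine ⟨?_, ⟨h23, h32⟩, ?_, ?_⟩
  · -- (i) ↔ (ii)
    constructor
    · -- ¬(i)... contrapositive
      intro hne
      by_contra hno
      push_neg at hno
      obtain ⟨f₀, hf₀z, hf₀⟩ := hno
      apply hne
      intro g₀
      set b := e.symm ⟨_, hρ g₀⟩ with hb
      refine ⟨b - (τ b / τ f₀) • f₀, ?_, ?_⟩
      · rw [map_sub, map_smul, smul_eq_mul, div_mul_cancel₀ _ hf₀, sub_self]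
      · intro x
        rw [map_sub, ContinuousMap.sub_apply, map_sub, map_sub, map_smul,
          ContinuousMap.smul_apply, map_smul, map_smul, hf₀z x, smul_zero, sub_zero]
        have : ι b x = algebraMap ℂ A ((g₀ : C(X,ℂ)) x) := by
          rw [hb, hlift g₀]; exact hscal _ x
        rw [this, hφalg]
    · -- (ii) → (i)
      intro hii hall
      obtain ⟨f, hfz, hf1⟩ := hall 1
      have h1 : ∀ x : X, (((1 : ↥(scalarSub ι)) : C(X,ℂ))) x = 1 := fun x => rfl
      have : τ (f - 1) = 0 := by
        apply hii
        intro x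
        rw [map_sub, ContinuousMap.sub_apply, map_sub, map_sub, ← hf1 x, h1 x]
        have : ι (1 : B) x = (1 : A) := by rw [map_one]; rfl
        rw [this, map_one, map_one, sub_self]
      rw [map_sub, map_one, hfz, zero_sub, neg_eq_zero] at this
      exact one_ne_zero this
  · -- (iii) → (iv)
    intro hiii
    refine ⟨τ.comp ((e.symm : ↥ι.range →ₐ[ℂ] B).comp
        (((scalHom X A).comp (scalarSub ι).val).codRestrict ι.range hρ)), ?_⟩
    intro f g₀ hg₀
    have hb : ι (e.symm ⟨_, hρ g₀⟩) = scalHom X A (g₀ : C(X,ℂ)) := hlift g₀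
    have := hiii f (e.symm ⟨_, hρ g₀⟩) (by
      intro x
      rw [hb, hscal _ x, ← hg₀ x])
    exact this.symm
  · -- (iv) → (iii)
    rintro ⟨ψ, hψ⟩ f g hg
    have hcont : Continuous fun x : X => τ (κ (ι f x)) :=
      hφcont.comp (ι f).continuous
    set g₀c : C(X, ℂ) := ⟨fun x => τ (κ (ι f x)), hcont⟩ with hg₀c
    have hmem : g₀c ∈ scalarSub ι := by
      show scalHom X A g₀c ∈ ι.range
      refine ⟨g, ContinuousMap.ext fun x => ?_⟩
      show ι g x = scalHom X A g₀c x
      rw [hg x, hscal _ x]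
      rfl
    set g₀ : ↥(scalarSub ι) := ⟨g₀c, hmem⟩ with hg₀
    have h1 : τ f = ψ g₀ := hψ f g₀ (fun x => rfl)
    have h2 : τ g = ψ g₀ := by
      refine hψ g g₀ ?_
      intro x
      show τ (κ (ι f x)) = τ (κ (ι g x))
      rw [hg x, hφalg]
    rw [h1, h2]
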